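/- arXiv:1605.06857 — 12 statements merged into one kernel-verified Lean document; each statement's English description precedes it below -/
import Mathlib

section
/- Closed form of the Odd+11 procedure: for all nonnegative integers a, b, c with 0 ≤ b ≤ 1 and 0 ≤ c ≤ 1, if y = 4a + 2b + c, then 2a + 12b + 6c ≡ −⌊5y/4⌋ (mod 7). -/
/-- Closed form of the Odd+11 procedure: if `y = 4a + 2b + c` with `b, c ∈ {0,1}`,
then `2a + 12b + 6c ≡ -⌊5y/4⌋ (mod 7)`. -/
theorem odd_plus_eleven_closed_form (a b c y : ℤ)
    (ha : 0 ≤ a) (hb0 : 0 ≤ b) (hb1 : b ≤ 1) (hc0 : 0 ≤ c) (hc1 : c ≤ 1)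
    (hy : y = 4 * a + 2 * b + c) :
    2 * a + 12 * b + 6 * c ≡ -(5 * y / 4) [ZMOD 7] := by
  subst hy
  interval_cases b <;> interval_cases c <;> simp only [Int.ModEq] <;> omega
end

section
/- The Parity Minus 3 procedure is correct: for every integer y with 0 ≤ y ≤ 99, define YS₁ = y − 3 if y is odd and YS₁ = y otherwise; YS₂ = YS₁ / 2 (an exact halving, since YS₁ is even); and YS₃ = YS₂ − 3 if the parity of YS₂ differs from the parity of y, and YS₃ = YS₂ otherwise. Then YS₃ ≡ −⌊5y/4⌋ (mod 7). -/
/-- Correctness of the Parity Minus 3 procedure: for `0 ≤ y ≤ 99`, the result `YS₃`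
of the procedure is congruent to the negative year share `-⌊5y/4⌋` modulo 7. -/
theorem parity_minus_three_correct (y : ℤ) (hy0 : 0 ≤ y) (hy1 : y ≤ 99)
    (YS1 : ℤ) (hYS1 : YS1 = if Odd y then y - 3 else y)
    (YS2 : ℤ) (hYS2 : YS2 = YS1 / 2)
    (YS3 : ℤ) (hYS3 : YS3 = if (Odd YS2 ↔ Odd y) then YS2 else YS2 - 3) :
    YS3 ≡ -(5 * y / 4) [ZMOD 7] := by
  subst hYS1 hYS2 hYS3
  interval_cases y <;> decide
end

section
/- Closed form of the Parity Minus 3 procedure: for all integers a, b, c with a ≥ 0, 0 ≤ b ≤ 1 and 0 ≤ c ≤ 1, if y = 4a + 2b + c, then 2a − 2b − c ≡ −⌊5y/4⌋ (mod 7). -/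
/-- Closed form of the Parity Minus 3 procedure: if `y = 4a + 2b + c` with `a ≥ 0`
and `b, c ∈ {0,1}`, then `2a - 2b - c ≡ -⌊5y/4⌋ (mod 7)`. -/
theorem parity_minus_three_closed_form (a b c y : ℤ)
    (ha : 0 ≤ a) (hb0 : 0 ≤ b) (hb1 : b ≤ 1) (hc0 : 0 ≤ c) (hc1 : c ≤ 1)
    (hy : y = 4 * a + 2 * b + c) :
    2 * a - 2 * b - c ≡ -(5 * y / 4) [ZMOD 7] := by
  subst hy
  interval_cases b <;> interval_cases c <;>
  · simp only [Int.ModEq, Int.emod_emod_of_dvd] at *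
    omega
end

section
/- Correctness of the Lewis Carroll/Conway division-by-12 method: for every natural number y, ⌊y/12⌋ + (y mod 12) + ⌊(y mod 12)/4⌋ ≡ ⌊5y/4⌋ (mod 7). -/
set_option maxHeartbeats 4000000 in
/-- Correctness of the Lewis Carroll/Conway division-by-12 method: for every natural
number `y`, `⌊y/12⌋ + (y mod 12) + ⌊(y mod 12)/4⌋ ≡ ⌊5y/4⌋ (mod 7)`. -/
theorem division_by_twelve_correct (y : ℕ) :
    y / 12 + y % 12 + (y % 12) / 4 ≡ 5 * y / 4 [MOD 7] := by
  obtain ⟨q, r, hr, rfl⟩ : ∃ q r, r < 84 ∧ y = 84 * q + r :=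
    ⟨y / 84, y % 84, Nat.mod_lt _ (by norm_num), (Nat.div_add_mod y 84).symm⟩
  simp only [Nat.ModEq]
  interval_cases r <;> omega
end

section
/- Correctness of Yu's Highest-Multiple-of-Four (division by 4) method: for all nonnegative integers q, r with 0 ≤ r < 4, if y = 4q + r, then 2q − r ≡ −⌊5y/4⌋ (mod 7). -/
/-- Correctness of Yu's Highest-Multiple-of-Four method: if `y = 4q + r` with
`0 ≤ r < 4`, then `2q - r ≡ -⌊5y/4⌋ (mod 7)`. -/
theorem division_by_four_correct (q r y : ℤ)
    (hq : 0 ≤ q) (hr0 : 0 ≤ r) (hr1 : r < 4) (hy : y = 4 * q + r) :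
    2 * q - r ≡ -(5 * y / 4) [ZMOD 7] := by
  have hdiv : 5 * y / 4 = 5 * q + r := by subst hy; omega
  rw [hdiv, Int.ModEq]
  omega
end

section
/- Correctness of the division-by-11 year share formula: for all nonnegative integers q, r with 0 ≤ r < 11, if y = 11q + r, then r + ⌊(r − q)/4⌋ ≡ ⌊5y/4⌋ (mod 7), where ⌊(r − q)/4⌋ is the floor of the possibly negative rational number (r − q)/4. -/
/-- Correctness of the division-by-11 year share formula: if `y = 11q + r` with
`0 ≤ r < 11`, then `r + ⌊(r - q)/4⌋ ≡ ⌊5y/4⌋ (mod 7)`, where the division of the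
possibly negative integer `r - q` by 4 is floor division. -/
theorem division_by_eleven_correct (q r y : ℤ)
    (hq : 0 ≤ q) (hr0 : 0 ≤ r) (hr1 : r < 11) (hy : y = 11 * q + r) :
    r + (r - q) / 4 ≡ 5 * y / 4 [ZMOD 7] := by
  subst hy
  have h : 5 * (11 * q + r) / 4 = 14 * q + (r + (r - q) / 4) := by omega
  rw [h]
  exact Int.modEq_iff_dvd.mpr ⟨2 * q, by ring⟩
end

section
/- Correctness of the division-by-16 year share formula: for all nonnegative integers q, r with 0 ≤ r < 16, if y = 16q + r, then −q + r + ⌊r/4⌋ ≡ ⌊5y/4⌋ (mod 7). -/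
/-- Correctness of the division-by-16 year share formula: if `y = 16q + r` with
`0 ≤ r < 16`, then `-q + r + ⌊r/4⌋ ≡ ⌊5y/4⌋ (mod 7)`. -/
theorem division_by_sixteen_correct (q r y : ℤ)
    (hq : 0 ≤ q) (hr0 : 0 ≤ r) (hr1 : r < 16) (hy : y = 16 * q + r) :
    -q + r + r / 4 ≡ 5 * y / 4 [ZMOD 7] := by
  have h : 5 * y / 4 = 20 * q + r + r / 4 := by subst hy; omega
  rw [h]
  have : (20 : ℤ) * q + r + r / 4 = (-q + r + r / 4) + 7 * (3 * q) := by ring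
  rw [this]
  exact (Int.ModEq.add_right _ (Int.ModEq.refl _)).trans
    (by simpa using (Int.modEq_iff_dvd.mpr ⟨3 * q, by ring⟩ : -q + r + r / 4 ≡ _ [ZMOD 7]))
end

section
/- Correctness of the division-by-17 year share formula: for all nonnegative integers q, r with 0 ≤ r < 17, if y = 17q + r, then r + ⌊(q + r)/4⌋ ≡ ⌊5y/4⌋ (mod 7). -/
/-- Correctness of the division-by-17 year share formula: if `y = 17q + r` with
`0 ≤ r < 17`, then `r + ⌊(q + r)/4⌋ ≡ ⌊5y/4⌋ (mod 7)`. -/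
theorem division_by_seventeen_correct (q r y : ℤ)
    (hq : 0 ≤ q) (hr0 : 0 ≤ r) (hr1 : r < 17) (hy : y = 17 * q + r) :
    r + (q + r) / 4 ≡ 5 * y / 4 [ZMOD 7] := by
  subst hy
  have h : 5 * (17 * q + r) / 4 = 21 * q + (r + (q + r) / 4) := by omega
  rw [h]
  have : Int.ModEq 7 (r + (q + r) / 4) (21 * q + (r + (q + r) / 4)) := by
    unfold Int.ModEq
    omega
  exact this
end

section
/- Correctness of Eisele's method: for all nonnegative integers q, r, t, u with 0 ≤ r < 4 and 0 ≤ u < 10, if y = 4q + r and 4q = 10t + u (so that t and u are the tens and units digits of the largest multiple of 4 not exceeding y, and u is necessarily even), then 2t − u/2 + r ≡ ⌊5y/4⌋ (mod 7), where u/2 is the exact half of the even number u. -/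
/-- Correctness of Eisele's method: if `y = 4q + r` with `0 ≤ r < 4` and
`4q = 10t + u` with `0 ≤ u < 10` (so `u` is even), then
`2t - u/2 + r ≡ ⌊5y/4⌋ (mod 7)`, where `u/2` is the exact half of `u`. -/
theorem eisele_correct (q r t u y : ℤ)
    (hq : 0 ≤ q) (hr0 : 0 ≤ r) (hr1 : r < 4) (ht : 0 ≤ t)
    (hu0 : 0 ≤ u) (hu1 : u < 10)
    (hy : y = 4 * q + r) (htu : 4 * q = 10 * t + u) :
    2 * t - u / 2 + r ≡ 5 * y / 4 [ZMOD 7] := by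
  have h1 : u / 2 = 2 * q - 5 * t := by omega
  have h2 : 5 * y / 4 = 5 * q + r := by omega
  rw [h1, h2, Int.ModEq]
  omega
end

section
/- Correctness of Method Aa on the year's digits: for all nonnegative integers t, u with 0 ≤ t ≤ 9 and 0 ≤ u ≤ 9, if y = 10t + u, then 2t − (⌊(2t + u)/4⌋ + u) ≡ −⌊5y/4⌋ (mod 7). -/
/-- Correctness of Method Aa on the year's digits: if `y = 10t + u` with digits
`t, u ∈ {0,…,9}`, then `2t - (⌊(2t + u)/4⌋ + u) ≡ -⌊5y/4⌋ (mod 7)`. -/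
theorem method_Aa_correct (t u y : ℤ)
    (ht0 : 0 ≤ t) (ht1 : t ≤ 9) (hu0 : 0 ≤ u) (hu1 : u ≤ 9)
    (hy : y = 10 * t + u) :
    2 * t - ((2 * t + u) / 4 + u) ≡ -(5 * y / 4) [ZMOD 7] := by
  subst hy
  interval_cases t <;> interval_cases u <;> decide
end

section
/- Correctness of Fong's method on the year's digits: for all nonnegative integers t, u with 0 ≤ t ≤ 9 and 0 ≤ u ≤ 9, if y = 10t + u, then 2t + 10(t mod 2) + u + ⌊(2(t mod 2) + u)/4⌋ ≡ ⌊5y/4⌋ (mod 7). -/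
/-- Correctness of Fong's method on the year's digits: if `y = 10t + u` with digits
`t, u ∈ {0,…,9}`, then
`2t + 10(t mod 2) + u + ⌊(2(t mod 2) + u)/4⌋ ≡ ⌊5y/4⌋ (mod 7)`. -/
theorem fong_correct (t u y : ℤ)
    (ht0 : 0 ≤ t) (ht1 : t ≤ 9) (hu0 : 0 ≤ u) (hu1 : u ≤ 9)
    (hy : y = 10 * t + u) :
    2 * t + 10 * (t % 2) + u + (2 * (t % 2) + u) / 4 ≡ 5 * y / 4 [ZMOD 7] := by
  subst hy
  interval_cases t <;> interval_cases u <;> decide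
end

section
/- Correctness of Method Ab on the year's digits: for all nonnegative integers t, u with 0 ≤ t ≤ 9 and 0 ≤ u ≤ 9, if y = 10t + u, then −⌊(5u − 6t)/4⌋ ≡ −⌊5y/4⌋ (mod 7), where ⌊(5u − 6t)/4⌋ is the floor of the possibly negative rational number (5u − 6t)/4. -/
/-- Correctness of Method Ab on the year's digits: if `y = 10t + u` with digits
`t, u ∈ {0,…,9}`, then `-⌊(5u - 6t)/4⌋ ≡ -⌊5y/4⌋ (mod 7)`, where the division of
the possibly negative integer `5u - 6t` by 4 is floor division. -/
theorem method_Ab_correct (t u y : ℤ)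
    (ht0 : 0 ≤ t) (ht1 : t ≤ 9) (hu0 : 0 ≤ u) (hu1 : u ≤ 9)
    (hy : y = 10 * t + u) :
    -((5 * u - 6 * t) / 4) ≡ -(5 * y / 4) [ZMOD 7] := by
  subst hy
  interval_cases t <;> interval_cases u <;> decide
end
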